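/- Let F be a field, R = F[X,Y,Z], and I = (X^4, X^3Y, XY^3, Y^4, X^2Y^2Z). Then: (i) X^2Y^2 ∈ I^2 : I; (ii) the Ratliff-Rush closure of I is ~I = (X,Y)^4; (iii) I : (X^2Y^2) = (X,Y,Z), so the maximal ideal (X,Y,Z) is an associated prime of R/I; and (iv) (X,Y,Z) is not an associated prime of R/~I = R/(X,Y)^4, since Z is a non-zerodivisor modulo (X,Y)^4. -/

import Mathlib

/-!
Membership in `(X,Y)^n` is read off exponents: it holds iff every monomial has `X,Y`-degree
at least `n`. Multiplying by a monomial shifts that degree additively, so `Z` is a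
non-zerodivisor modulo `(X,Y)^4`, and a factor `X^{4k}` can be cancelled from `(X,Y)^{4k+4}`.
Since `I ⊆ (X,Y)^4` and `X^4 ∈ I`, every `r` with `r I^k ⊆ I^{k+1}` has
`r X^{4k} ∈ (X,Y)^{4k+4}`, hence `r ∈ (X,Y)^4`; conversely `(X,Y)^4 = I + (X^2Y^2)` and
`X^2Y^2 I ⊆ I^2`. The colon `I : X^2Y^2` contains the maximal ideal `(X,Y,Z)` and is proper
since `X^2Y^2 ∉ I`, so the two are equal.
-/

/-- The Ratliff-Rush closure of the power `I^n`:  `⋃_{k≥0} (I^{n+k} : I^k)`. -/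
noncomputable def rrPow {R : Type*} [CommRing R] (I : Ideal R) (n : ℕ) : Ideal R :=
  ⨆ k : ℕ, (I ^ (n + k)).colon ((I ^ k : Ideal R) : Set R)

namespace Ideal

variable {R : Type*} [CommSemiring R]

theorem pow_mul_pow_mem_span_pair_pow (x y : R) (a b : ℕ) :
    x ^ a * y ^ b ∈ span {x, y} ^ (a + b) :=
  pow_add (span {x, y}) a b ▸ mul_mem_mul (pow_mem_pow (subset_span (by simp)) a)
    (pow_mem_pow (subset_span (by simp)) b)

theorem span_pair_pow (x y : R) (n : ℕ) :
    span {x, y} ^ n = span {z | ∃ a b, a + b = n ∧ x ^ a * y ^ b = z} := by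
  refine le_antisymm ?_ (span_le.mpr fun _ ⟨a, b, hab, hz⟩ => hz ▸ hab ▸
    pow_mul_pow_mem_span_pair_pow x y a b)
  induction n with
  | zero => simp
  | succ n ih =>
    rw [pow_succ]
    refine (mul_mono_left ih).trans ?_
    rw [span_mul_span', span_le]
    rintro _ ⟨_, ⟨a, b, rfl, rfl⟩, w, hw, rfl⟩
    rcases hw with rfl | rfl
    · exact subset_span ⟨a + 1, b, by ring, by ring⟩
    · exact subset_span ⟨a, b + 1, by ring, by ring⟩

end Ideal

namespace MvPolynomial

open Finsupp

variable {σ R : Type*} [CommSemiring R] {i j : σ}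

theorem mem_span_X_X_pow_iff (hij : i ≠ j) (n : ℕ) (f : MvPolynomial σ R) :
    f ∈ Ideal.span {X i, X j} ^ n ↔ ∀ m ∈ f.support, n ≤ m i + m j := by
  have hgen : {z | ∃ a b, a + b = n ∧ (X i : MvPolynomial σ R) ^ a * X j ^ b = z} =
      (monomial · 1) '' {s | ∃ a b, a + b = n ∧ single i a + single j b = s} := by
    ext z
    simp [X_pow_eq_monomial, monomial_mul]
  rw [Ideal.span_pair_pow, hgen, mem_ideal_span_monomial_image]
  refine forall₂_congr fun m _ => ⟨?_, fun h => ?_⟩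
  · rintro ⟨_, ⟨a, b, rfl, rfl⟩, hle⟩
    have hi := hle i
    have hj := hle j
    simp only [Finsupp.add_apply, single_eq_same, single_eq_of_ne hij, single_eq_of_ne hij.symm,
      add_zero, zero_add] at hi hj
    omega
  · refine ⟨_, ⟨min (m i) n, n - min (m i) n, by omega, rfl⟩, fun k => ?_⟩
    by_cases hki : k = i
    · subst hki; simp [hij]
    by_cases hkj : k = j
    · subst hkj
      simp only [Finsupp.add_apply, single_eq_same, single_eq_of_ne hij.symm, zero_add]
      omega
    · simp [hki, hkj]

theorem mem_span_X_X_pow_of_monomial_mul_mem (hij : i ≠ j) {s : σ →₀ ℕ} {n : ℕ}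
    {f : MvPolynomial σ R} (h : monomial s 1 * f ∈ Ideal.span {X i, X j} ^ (s i + s j + n)) :
    f ∈ Ideal.span {X i, X j} ^ n := by
  rw [mem_span_X_X_pow_iff hij] at h ⊢
  intro m hm
  have hsm : s + m ∈ (monomial s 1 * f).support := by
    rwa [mem_support_iff, coeff_monomial_mul, one_mul, ← mem_support_iff]
  have := h _ hsm
  simp only [Finsupp.add_apply] at this
  omega

theorem mem_span_X_X_pow_of_X_mul_mem (hij : i ≠ j) {k : σ} (hki : k ≠ i) (hkj : k ≠ j) {n : ℕ}
    {f : MvPolynomial σ R} (h : X k * f ∈ Ideal.span {X i, X j} ^ n) :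
    f ∈ Ideal.span {X i, X j} ^ n :=
  mem_span_X_X_pow_of_monomial_mul_mem hij (s := single k 1) (by simpa [X, hki, hkj] using h)

end MvPolynomial

section RatliffRush

variable {R : Type*} [CommRing R] (I : Ideal R)

theorem colon_le_rrPow (n k : ℕ) : (I ^ (n + k)).colon ((I ^ k : Ideal R) : Set R) ≤ rrPow I n :=
  le_iSup (fun k => (I ^ (n + k)).colon ((I ^ k : Ideal R) : Set R)) k

theorem pow_le_rrPow (n : ℕ) : I ^ n ≤ rrPow I n :=
  Ideal.le_colon.trans (colon_le_rrPow I n 0)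

theorem rrPow_le_pow_of_cancel {L : Ideal R} {d n : ℕ} (hIL : I ≤ L ^ d) {x : R} (hx : x ∈ I)
    (hcancel : ∀ (k : ℕ) (f : R), x ^ k * f ∈ L ^ (d * k + d * n) → f ∈ L ^ (d * n)) :
    rrPow I n ≤ L ^ (d * n) := by
  refine iSup_le fun k r hr => hcancel k r ?_
  have hrx : r * x ^ k ∈ I ^ (n + k) := Submodule.mem_colon.mp hr _ (Ideal.pow_mem_pow hx k)
  have hle : I ^ (n + k) ≤ L ^ (d * k + d * n) := by
    rw [← mul_add, add_comm k, pow_mul]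
    exact Ideal.pow_right_mono hIL _
  exact mul_comm r (x ^ k) ▸ hle hrx

end RatliffRush

section AssociatedPrime

variable {R : Type*} [CommRing R] {P : Ideal R}

theorem Ideal.colon_bot_singleton_mk (I : Ideal R) (r : R) :
    (⊥ : Submodule R (R ⧸ I)).colon {Ideal.Quotient.mk I r} = I.colon (span {r}) := by
  ext s
  rw [Submodule.mem_colon_singleton, Submodule.mem_bot, Ideal.mem_colon_span_singleton,
    ← Ideal.Quotient.eq_zero_iff_mem, map_mul]
  rfl

theorem isAssociatedPrime_quotient_of_colon_eq (hP : P.IsPrime) {I : Ideal R} {r : R}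
    (h : I.colon (Ideal.span {r}) = P) : IsAssociatedPrime P (R ⧸ I) :=
  ⟨hP, Ideal.Quotient.mk I r, by rw [Ideal.colon_bot_singleton_mk, h, hP.radical]⟩

theorem IsAssociatedPrime.not_isSMulRegular_of_mem {M : Type*} [AddCommGroup M] [Module R M]
    (h : IsAssociatedPrime P M) {x : R} (hx : x ∈ P) : ¬IsSMulRegular M x := by
  intro hreg
  obtain ⟨hP, m, rfl⟩ := h
  obtain ⟨k, hk⟩ := hx
  rw [Submodule.mem_colon_singleton, Submodule.mem_bot] at hk
  obtain rfl : m = 0 := hreg.pow k (hk.trans (smul_zero _).symm)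
  exact hP.ne_top (by rw [Submodule.colon_singleton_zero, Ideal.radical_top])

end AssociatedPrime

namespace MvPolynomial

theorem idealOfVars_eq_ker_constantCoeff {σ R : Type*} [CommSemiring R] :
    idealOfVars σ R = RingHom.ker constantCoeff := by
  ext p
  rw [← pow_one (idealOfVars σ R), mem_pow_idealOfVars_iff', RingHom.mem_ker, constantCoeff_eq]
  simp [Finsupp.degree_eq_zero_iff]

theorem isMaximal_idealOfVars (σ K : Type*) [Field K] : (idealOfVars σ K).IsMaximal :=
  idealOfVars_eq_ker_constantCoeff (σ := σ) (R := K) ▸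
    RingHom.ker_isMaximal_of_surjective _ fun r => ⟨C r, constantCoeff_C σ r⟩

end MvPolynomial

def exampleIdeal {A : Type*} [CommRing A] (x y z : A) : Ideal A :=
  Ideal.span {x ^ 4, x ^ 3 * y, x * y ^ 3, y ^ 4, x ^ 2 * y ^ 2 * z}

namespace exampleIdeal

variable {A : Type*} [CommRing A] (x y z : A)

theorem sq_mul_sq_mem_colon :
    x ^ 2 * y ^ 2 ∈ (exampleIdeal x y z ^ 2).colon (exampleIdeal x y z : Set A) := by
  have hsq : ∀ {a b : A}, a ∈ exampleIdeal x y z → b ∈ exampleIdeal x y z →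
      a * b ∈ exampleIdeal x y z ^ 2 :=
    fun ha hb => pow_two (exampleIdeal x y z) ▸ Ideal.mul_mem_mul ha hb
  have hgen : ∀ {g}, g ∈ ({x ^ 4, x ^ 3 * y, x * y ^ 3, y ^ 4, x ^ 2 * y ^ 2 * z} : Set A) →
      g ∈ exampleIdeal x y z :=
    fun hg => Ideal.subset_span hg
  rw [exampleIdeal, Ideal.colon_span, Submodule.mem_colon]
  simp only [Set.mem_insert_iff, Set.mem_singleton_iff, forall_eq_or_imp, forall_eq, smul_eq_mul]
  refine ⟨?_, ?_, ?_, ?_, ?_⟩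
  · rw [show x ^ 2 * y ^ 2 * x ^ 4 = (x ^ 3 * y) * (x ^ 3 * y) by ring]
    exact hsq (hgen (by simp)) (hgen (by simp))
  · rw [show x ^ 2 * y ^ 2 * (x ^ 3 * y) = x ^ 4 * (x * y ^ 3) by ring]
    exact hsq (hgen (by simp)) (hgen (by simp))
  · rw [show x ^ 2 * y ^ 2 * (x * y ^ 3) = (x ^ 3 * y) * y ^ 4 by ring]
    exact hsq (hgen (by simp)) (hgen (by simp))
  · rw [show x ^ 2 * y ^ 2 * y ^ 4 = (x * y ^ 3) * (x * y ^ 3) by ring]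
    exact hsq (hgen (by simp)) (hgen (by simp))
  · rw [show x ^ 2 * y ^ 2 * (x ^ 2 * y ^ 2 * z) = z * (x ^ 4 * y ^ 4) by ring]
    exact Ideal.mul_mem_left _ z (hsq (hgen (by simp)) (hgen (by simp)))

theorem le_span_pair_pow_four : exampleIdeal x y z ≤ Ideal.span {x, y} ^ 4 := by
  rw [exampleIdeal, Ideal.span_le]
  simp only [Set.insert_subset_iff, Set.singleton_subset_iff, SetLike.mem_coe]
  refine ⟨?_, ?_, ?_, ?_, ?_⟩
  · simpa using Ideal.pow_mul_pow_mem_span_pair_pow x y 4 0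
  · simpa using Ideal.pow_mul_pow_mem_span_pair_pow x y 3 1
  · simpa using Ideal.pow_mul_pow_mem_span_pair_pow x y 1 3
  · simpa using Ideal.pow_mul_pow_mem_span_pair_pow x y 0 4
  · exact Ideal.mul_mem_right z _ (Ideal.pow_mul_pow_mem_span_pair_pow x y 2 2)

theorem span_pair_pow_four_le_rrPow : Ideal.span {x, y} ^ 4 ≤ rrPow (exampleIdeal x y z) 1 := by
  have hgen : ∀ {g}, g ∈ ({x ^ 4, x ^ 3 * y, x * y ^ 3, y ^ 4, x ^ 2 * y ^ 2 * z} : Set A) →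
      g ∈ rrPow (exampleIdeal x y z) 1 :=
    fun hg => pow_le_rrPow _ 1 ((pow_one (exampleIdeal x y z)).symm ▸ Ideal.subset_span hg)
  rw [Ideal.span_pair_pow, Ideal.span_le]
  rintro _ ⟨a, b, hab, rfl⟩
  obtain rfl : b = 4 - a := by omega
  have ha : a ≤ 4 := by omega
  interval_cases a
  · simpa using hgen (by simp)
  · simpa using hgen (by simp)
  · exact colon_le_rrPow _ 1 1 (by rw [pow_one]; exact sq_mul_sq_mem_colon x y z)
  · simpa using hgen (by simp)
  · simpa using hgen (by simp)

theorem span_triple_le_colon :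
    Ideal.span {x, y, z} ≤ (exampleIdeal x y z).colon (Ideal.span {x ^ 2 * y ^ 2}) := by
  have hgen : ∀ {g}, g ∈ ({x ^ 4, x ^ 3 * y, x * y ^ 3, y ^ 4, x ^ 2 * y ^ 2 * z} : Set A) →
      g ∈ exampleIdeal x y z :=
    fun hg => Ideal.subset_span hg
  rw [Ideal.span_le]
  simp only [Set.insert_subset_iff, Set.singleton_subset_iff, SetLike.mem_coe,
    Ideal.mem_colon_span_singleton]
  refine ⟨?_, ?_, ?_⟩
  · rw [show x * (x ^ 2 * y ^ 2) = y * (x ^ 3 * y) by ring]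
    exact Ideal.mul_mem_left _ y (hgen (by simp))
  · rw [show y * (x ^ 2 * y ^ 2) = x * (x * y ^ 3) by ring]
    exact Ideal.mul_mem_left _ x (hgen (by simp))
  · rw [show z * (x ^ 2 * y ^ 2) = x ^ 2 * y ^ 2 * z by ring]
    exact hgen (by simp)

end exampleIdeal

open MvPolynomial

theorem isMaximal_span_X_X_X (K : Type*) [Field K] :
    (Ideal.span {X 0, X 1, X 2} : Ideal (MvPolynomial (Fin 3) K)).IsMaximal := by
  convert isMaximal_idealOfVars (Fin 3) K using 2
  ext
  simp [Fin.exists_fin_succ, eq_comm]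

theorem rrPow_exampleIdeal_X (R : Type*) [CommRing R] :
    rrPow (exampleIdeal (X 0 : MvPolynomial (Fin 3) R) (X 1) (X 2)) 1 =
      Ideal.span {X 0, X 1} ^ 4 := by
  refine le_antisymm ?_ (exampleIdeal.span_pair_pow_four_le_rrPow _ _ _)
  have hX : (X 0 : MvPolynomial (Fin 3) R) ^ 4 ∈ exampleIdeal (X 0) (X 1) (X 2) :=
    Ideal.subset_span (by simp)
  have hcancel (k : ℕ) (f : MvPolynomial (Fin 3) R)
      (hf : (X 0 ^ 4) ^ k * f ∈ Ideal.span {X 0, X 1} ^ (4 * k + 4 * 1)) :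
      f ∈ Ideal.span {X 0, X 1} ^ (4 * 1) := by
    rw [← pow_mul, X_pow_eq_monomial] at hf
    exact mem_span_X_X_pow_of_monomial_mul_mem (s := Finsupp.single 0 (4 * k)) (by decide)
      (by simpa using hf)
  simpa using rrPow_le_pow_of_cancel _ (exampleIdeal.le_span_pair_pow_four _ _ _) hX hcancel

theorem X_sq_mul_X_sq_notMem_exampleIdeal_X (R : Type*) [CommRing R] [Nontrivial R] :
    (X 0 ^ 2 * X 1 ^ 2 : MvPolynomial (Fin 3) R) ∉ exampleIdeal (X 0) (X 1) (X 2) := by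
  have hmonomial : exampleIdeal (X 0 : MvPolynomial (Fin 3) R) (X 1) (X 2) =
      Ideal.span ((monomial · (1 : R)) '' {Finsupp.single 0 4,
        Finsupp.single 0 3 + Finsupp.single 1 1, Finsupp.single 0 1 + Finsupp.single 1 3,
        Finsupp.single 1 4, Finsupp.single 0 2 + Finsupp.single 1 2 + Finsupp.single 2 1}) := by
    simp [exampleIdeal, Set.image_insert_eq, X, monomial_pow, monomial_mul]
  rw [hmonomial, mem_ideal_span_monomial_image]
  simp [X, monomial_pow, monomial_mul, Finsupp.le_def, Fin.forall_fin_succ]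

theorem colon_exampleIdeal_X (K : Type*) [Field K] :
    (exampleIdeal (X 0 : MvPolynomial (Fin 3) K) (X 1) (X 2)).colon
      ((Ideal.span {X 0 ^ 2 * X 1 ^ 2} : Ideal (MvPolynomial (Fin 3) K)) :
        Set (MvPolynomial (Fin 3) K)) =
        Ideal.span {X 0, X 1, X 2} := by
  refine ((isMaximal_span_X_X_X K).eq_of_le (fun htop => ?_) (exampleIdeal.span_triple_le_colon _ _ _)).symm
  have h1 : (1 : MvPolynomial (Fin 3) K) ∈ _ := htop ▸ Submodule.mem_top
  rw [Ideal.mem_colon_span_singleton, one_mul] at h1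
  exact X_sq_mul_X_sq_notMem_exampleIdeal_X K h1

/-- Let `R = F[X,Y,Z]` and `I = (X^4, X^3Y, XY^3, Y^4, X^2Y^2Z)`.  Then
(i) `X^2Y^2 ∈ I^2 : I`; (ii) `~I = (X,Y)^4`; (iii) `I : X^2Y^2 = (X,Y,Z)`, so `(X,Y,Z)`
is an associated prime of `R/I`; and (iv) `(X,Y,Z)` is not an associated prime of
`R/~I = R/(X,Y)^4`, since `Z` is a non-zerodivisor modulo `(X,Y)^4`. -/
theorem stmt_18 (F : Type*) [Field F]
    (X Y Z : MvPolynomial (Fin 3) F)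
    (hX : X = MvPolynomial.X 0) (hY : Y = MvPolynomial.X 1) (hZ : Z = MvPolynomial.X 2)
    (I : Ideal (MvPolynomial (Fin 3) F))
    (hI : I = Ideal.span {X ^ 4, X ^ 3 * Y, X * Y ^ 3, Y ^ 4, X ^ 2 * Y ^ 2 * Z}) :
    X ^ 2 * Y ^ 2 ∈ (I ^ 2).colon I ∧
    rrPow I 1 = Ideal.span {X, Y} ^ 4 ∧
    I.colon (Ideal.span {X ^ 2 * Y ^ 2}) = Ideal.span {X, Y, Z} ∧
    IsAssociatedPrime (Ideal.span {X, Y, Z}) (MvPolynomial (Fin 3) F ⧸ I) ∧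
    ¬ IsAssociatedPrime (Ideal.span {X, Y, Z})
        (MvPolynomial (Fin 3) F ⧸ (Ideal.span {X, Y} ^ 4)) ∧
    (∀ f : MvPolynomial (Fin 3) F,
      Z * f ∈ Ideal.span {X, Y} ^ 4 → f ∈ Ideal.span {X, Y} ^ 4) := by
  subst hX hY hZ hI
  have hcolon := colon_exampleIdeal_X F
  have hregular (f : MvPolynomial (Fin 3) F) :
      X 2 * f ∈ Ideal.span {X 0, X 1} ^ 4 → f ∈ Ideal.span {X 0, X 1} ^ 4 :=
    mem_span_X_X_pow_of_X_mul_mem (by decide) (by decide) (by decide)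
  refine ⟨exampleIdeal.sq_mul_sq_mem_colon _ _ _, rrPow_exampleIdeal_X F, hcolon,
    isAssociatedPrime_quotient_of_colon_eq (isMaximal_span_X_X_X F).isPrime hcolon, fun h => ?_, hregular⟩
  exact h.not_isSMulRegular_of_mem (x := X 2) (Ideal.subset_span (by simp))
    ((isSMulRegular_quotient_iff_mem_of_smul_mem _ _).mpr hregular)
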